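/- For n ≥ 2 and any doubly pure element a of the Cayley–Dickson algebra A_n with ‖a‖ = 1, the four-dimensional real linear span ℍ_a of {e₀, ã, a, ẽ₀} is closed under multiplication, and the linear map determined by e₀ ↦ e₀, e₁ ↦ ã, e₂ ↦ a, e₃ ↦ ẽ₀ is an algebra isomorphism from the quaternions A_2 = ℍ onto ℍ_a. -/

import Mathlib

noncomputable section

/-- The Cayley–Dickson algebra `A n` of dimension `2^n` over `ℝ`:
`A 0 = ℝ` and `A (n+1) = A n × A n`. -/
def CD : ℕ → Type
  | 0 => ℝ
  | n + 1 => CD n × CD n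

namespace CD

instance instAddCommGroup : (n : ℕ) → AddCommGroup (CD n)
  | 0 => inferInstanceAs (AddCommGroup ℝ)
  | n + 1 =>
    letI := instAddCommGroup n
    inferInstanceAs (AddCommGroup (CD n × CD n))

instance instModule : (n : ℕ) → Module ℝ (CD n)
  | 0 => inferInstanceAs (Module ℝ ℝ)
  | n + 1 =>
    letI := instAddCommGroup n
    letI := instModule n
    inferInstanceAs (Module ℝ (CD n × CD n))

/-- Conjugation: `x̄ = x` on `ℝ` and `(x₁,x₂)‾ = (x̄₁, -x₂)`. -/
protected def conj : {n : ℕ} → CD n → CD n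
  | 0, x => x
  | _ + 1, x => (CD.conj x.1, -x.2)

/-- Cayley–Dickson multiplication: `(a,b)(x,y) = (ax - ȳb, ya + bx̄)`. -/
protected def mul : {n : ℕ} → CD n → CD n → CD n
  | 0, x, y => (show ℝ from x) * (show ℝ from y)
  | _ + 1, x, y =>
    (CD.mul x.1 y.1 - CD.mul (CD.conj y.2) x.2,
     CD.mul y.2 x.1 + CD.mul x.2 (CD.conj y.1))

instance instMul (n : ℕ) : Mul (CD n) := ⟨CD.mul⟩

/-- The multiplicative unit `e₀` of `A n`. -/
def e0 : (n : ℕ) → CD n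
  | 0 => (1 : ℝ)
  | n + 1 => (e0 n, 0)

/-- The element `ẽ₀ = (0, e₀)` of `A n` (junk value `0` for `n = 0`). -/
def te0 : (n : ℕ) → CD n
  | 0 => 0
  | n + 1 => (0, e0 n)

/-- The "complexification" `α̃ = (-b, a)` of `α = (a,b)` (junk value `0` for `n = 0`);
note `α̃ = α·ẽ₀`. -/
def tilde : {n : ℕ} → CD n → CD n
  | 0, _ => 0
  | _ + 1, x => (-x.2, x.1)

/-- The standard inner product on `A n ≅ ℝ^{2^n}`. -/
protected def inner : {n : ℕ} → CD n → CD n → ℝ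
  | 0, x, y => (show ℝ from x) * (show ℝ from y)
  | _ + 1, x, y => CD.inner x.1 y.1 + CD.inner x.2 y.2

/-- The euclidean norm on `A n`. -/
protected def norm {n : ℕ} (x : CD n) : ℝ := Real.sqrt (CD.inner x x)

/-- `x` is pure if its trace `t(x) = x + x̄` vanishes. -/
def IsPure {n : ℕ} (x : CD n) : Prop := x + CD.conj x = 0

/-- `x = (a,b)` is doubly pure if both `a` and `b` are pure
(equivalently, both `x` and `x̃` are pure). -/
def IsDoublyPure : {n : ℕ} → CD n → Prop
  | 0, x => x = 0
  | _ + 1, x => IsPure x.1 ∧ IsPure x.2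

/-- The associator `(x,y,z) = (xy)z - x(yz)`. -/
def assoc {n : ℕ} (x y z : CD n) : CD n := (x * y) * z - x * (y * z)

/-- The subspace `ℍ_a`: the real span of `{e₀, ã, a, ẽ₀}`. -/
def Ha {n : ℕ} (a : CD n) : Submodule ℝ (CD n) :=
  Submodule.span ℝ {e0 n, tilde a, a, te0 n}

/-- The orthogonal complement `ℍ_a^⊥` of `ℍ_a` in `A n`. -/
def HaPerp {n : ℕ} (a : CD n) : Set (CD n) :=
  {x | ∀ y ∈ Ha a, CD.inner x y = 0}

/-- The element `ε = (ẽ₀, 0)` of `A (n+1)`. -/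
def eps (n : ℕ) : CD (n + 1) := (te0 n, 0)

/-- `α̂ = (b,a)` for `α = (a,b) ∈ A (n+1)`. -/
def hat {n : ℕ} (x : CD (n + 1)) : CD (n + 1) := (x.2, x.1)

/-- The element `(a, b)` of `A (n+1) = A n × A n`. -/
def pair {n : ℕ} (a b : CD n) : CD (n + 1) := (a, b)

end CD

/-- The canonical basis vector `e₁` of `A 2 = ℍ`. -/
def q1 : CD 2 := (CD.te0 1, 0)
/-- The canonical basis vector `e₂` of `A 2 = ℍ`. -/
def q2 : CD 2 := (0, CD.e0 1)
/-- The canonical basis vector `e₃` of `A 2 = ℍ`. -/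
def q3 : CD 2 := (0, CD.te0 1)

/-!
If `a = (b, c)` is doubly pure, then `b` and `c` are pure, so `b² = -‖b‖² e₀` and `c² = -‖c‖² e₀`;
feeding this into the Cayley–Dickson formula shows that for `‖a‖ = 1` the elements `ã, a, ẽ₀`
satisfy the multiplication table of the quaternion units `e₁, e₂, e₃` (the key identity being
`α ẽ₀ = α̃`). The linear map `ℍ → A n` sending `e₀, e₁, e₂, e₃` to `e₀, ã, a, ẽ₀` is therefore
multiplicative on pairs of basis vectors, hence multiplicative by bilinearity, and its range
`ℍ_a` is closed under multiplication. It is injective because `x̄ x = ‖x‖² e₀`: if `φ x = 0`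
then `‖x‖² e₀ = φ x̄ · φ x = 0`.
-/

-- Mathlib's `QuaternionAlgebra.Basis` needs an associative algebra, which `A n` is not for `n ≥ 3`.
structure IsQuaternionTriple {A : Type*} [Mul A] [Neg A] (e i j k : A) : Prop where
  i_mul_i : i * i = -e
  j_mul_j : j * j = -e
  k_mul_k : k * k = -e
  i_mul_j : i * j = k
  j_mul_i : j * i = -k
  j_mul_k : j * k = i
  k_mul_j : k * j = -i
  k_mul_i : k * i = j
  i_mul_k : i * k = -j

namespace CD

variable {n : ℕ}

@[ext] lemma ext {x y : CD (n + 1)} (h₁ : x.1 = y.1) (h₂ : x.2 = y.2) : x = y := Prod.ext h₁ h₂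

@[simp] lemma fst_add (x y : CD (n + 1)) : (x + y).1 = x.1 + y.1 := rfl
@[simp] lemma snd_add (x y : CD (n + 1)) : (x + y).2 = x.2 + y.2 := rfl
@[simp] lemma fst_neg (x : CD (n + 1)) : (-x).1 = -x.1 := rfl
@[simp] lemma snd_neg (x : CD (n + 1)) : (-x).2 = -x.2 := rfl
@[simp] lemma fst_zero : (0 : CD (n + 1)).1 = 0 := rfl
@[simp] lemma snd_zero : (0 : CD (n + 1)).2 = 0 := rfl
@[simp] lemma fst_smul (r : ℝ) (x : CD (n + 1)) : (r • x).1 = r • x.1 := rfl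
@[simp] lemma snd_smul (r : ℝ) (x : CD (n + 1)) : (r • x).2 = r • x.2 := rfl
@[simp] lemma fst_mul (x y : CD (n + 1)) : (x * y).1 = x.1 * y.1 - CD.conj y.2 * x.2 := rfl
@[simp] lemma snd_mul (x y : CD (n + 1)) : (x * y).2 = y.2 * x.1 + x.2 * CD.conj y.1 := rfl
@[simp] lemma fst_conj (x : CD (n + 1)) : (CD.conj x).1 = CD.conj x.1 := rfl
@[simp] lemma snd_conj (x : CD (n + 1)) : (CD.conj x).2 = -x.2 := rfl
@[simp] lemma fst_e0 : (e0 (n + 1)).1 = e0 n := rfl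
@[simp] lemma snd_e0 : (e0 (n + 1)).2 = 0 := rfl
@[simp] lemma fst_te0 : (te0 (n + 1)).1 = 0 := rfl
@[simp] lemma snd_te0 : (te0 (n + 1)).2 = e0 n := rfl
@[simp] lemma fst_tilde (x : CD (n + 1)) : (tilde x).1 = -x.2 := rfl
@[simp] lemma snd_tilde (x : CD (n + 1)) : (tilde x).2 = x.1 := rfl

lemma inner_succ (x y : CD (n + 1)) : CD.inner x y = CD.inner x.1 y.1 + CD.inner x.2 y.2 := rfl

lemma conj_add (x y : CD n) : CD.conj (x + y) = CD.conj x + CD.conj y := by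
  induction n with
  | zero => rfl
  | succ n ih => ext <;> simp [ih, add_comm]

lemma conj_smul (r : ℝ) (x : CD n) : CD.conj (r • x) = r • CD.conj x := by
  induction n with
  | zero => rfl
  | succ n ih => ext <;> simp [ih]

lemma conj_neg (x : CD n) : CD.conj (-x) = -CD.conj x := by
  rw [← neg_one_smul ℝ x, conj_smul, neg_one_smul]

lemma conj_zero : CD.conj (0 : CD n) = 0 := by
  simpa using conj_smul 0 (0 : CD n)

@[simp] lemma conj_e0 : CD.conj (e0 n) = e0 n := by
  induction n with
  | zero => rfl
  | succ n ih => ext <;> simp [ih]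

lemma mul_add_and_add_mul :
    (∀ x y z : CD n, x * (y + z) = x * y + x * z) ∧ ∀ x y z : CD n, (x + y) * z = x * z + y * z := by
  induction n with
  | zero => exact ⟨fun x => mul_add (show ℝ from x), fun x => add_mul (show ℝ from x)⟩
  | succ n ih =>
    obtain ⟨mul_add, add_mul⟩ := ih
    constructor <;> intro x y z <;> ext <;>
      simp only [fst_mul, snd_mul, fst_add, snd_add, conj_add, mul_add, add_mul] <;> abel

-- Only a local instance: a global one would change the `Mul` instance that `*` on `CD n`
-- elaborates to everywhere after this point.
@[reducible] def nonUnitalNonAssocRing (n : ℕ) : NonUnitalNonAssocRing (CD n) :=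
  { instAddCommGroup n, instMul n with
    left_distrib := mul_add_and_add_mul.1
    right_distrib := mul_add_and_add_mul.2
    zero_mul := fun x => by simpa using (mul_add_and_add_mul.2 0 0 x).symm
    mul_zero := fun x => by simpa using (mul_add_and_add_mul.1 x 0 0).symm }

attribute [local instance] nonUnitalNonAssocRing

lemma smul_mul_and_mul_smul (r : ℝ) :
    ∀ x y : CD n, (r • x) * y = r • (x * y) ∧ x * (r • y) = r • (x * y) := by
  induction n with
  | zero => exact fun x y => ⟨smul_mul_assoc r (show ℝ from x) y, mul_smul_comm r (show ℝ from x) y⟩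
  | succ n ih =>
    intro x y
    constructor <;> ext <;> simp [ih, conj_smul, smul_sub, smul_add]

lemma isScalarTower (n : ℕ) : IsScalarTower ℝ (CD n) (CD n) :=
  ⟨fun r x y => (smul_mul_and_mul_smul r x y).1⟩

lemma smulCommClass (n : ℕ) : SMulCommClass ℝ (CD n) (CD n) :=
  ⟨fun r x y => (smul_mul_and_mul_smul r x y).2.symm⟩

attribute [local instance] isScalarTower smulCommClass

@[simp] lemma mul_e0 (x : CD n) : x * e0 n = x := by
  induction n with
  | zero => exact mul_one (show ℝ from x)
  | succ n ih => ext <;> simp [ih, conj_zero]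

@[simp] lemma e0_mul (x : CD n) : e0 n * x = x := by
  induction n with
  | zero => exact one_mul (show ℝ from x)
  | succ n ih => ext <;> simp [ih]

lemma e0_ne_zero : e0 n ≠ 0 := by
  induction n with
  | zero => exact one_ne_zero (α := ℝ)
  | succ n ih => exact fun h => ih (congrArg Prod.fst h)

lemma inner_self_nonneg (x : CD n) : 0 ≤ CD.inner x x := by
  induction n with
  | zero => exact mul_self_nonneg (show ℝ from x)
  | succ n ih => exact add_nonneg (ih x.1) (ih x.2)

lemma eq_zero_of_inner_self_eq_zero {x : CD n} (hx : CD.inner x x = 0) : x = 0 := by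
  induction n with
  | zero => exact (mul_self_eq_zero (M₀ := ℝ)).mp hx
  | succ n ih =>
    rw [inner_succ] at hx
    have h₁ := inner_self_nonneg x.1
    have h₂ := inner_self_nonneg x.2
    ext
    · exact ih (by linarith)
    · exact ih (by linarith)

lemma inner_neg_neg (x : CD n) : CD.inner (-x) (-x) = CD.inner x x := by
  induction n with
  | zero => exact neg_mul_neg (show ℝ from x) x
  | succ n ih => simp only [inner_succ, fst_neg, snd_neg, ih]

lemma conj_mul_self (x : CD n) : CD.conj x * x = CD.inner x x • e0 n := by
  induction n with
  | zero => exact (mul_one (M := ℝ) _).symm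
  | succ n ih => ext <;> simp [ih, inner_succ, add_smul]

lemma IsPure.conj_eq {x : CD n} (hx : IsPure x) : CD.conj x = -x :=
  (neg_eq_of_add_eq_zero_right hx).symm

lemma IsPure.neg {x : CD n} (hx : IsPure x) : IsPure (-x) := by
  rw [IsPure, conj_neg, ← neg_add, hx, neg_zero]

lemma IsPure.mul_self {x : CD n} (hx : IsPure x) : x * x = -(CD.inner x x • e0 n) := by
  rw [← conj_mul_self, hx.conj_eq, neg_mul, neg_neg]

lemma IsDoublyPure.isPure {a : CD (n + 1)} (ha : IsDoublyPure a) : IsPure a := by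
  ext
  · exact ha.1
  · simp

lemma isDoublyPure_tilde {a : CD (n + 1)} (ha : IsDoublyPure a) : IsDoublyPure (tilde a) :=
  ⟨ha.2.neg, ha.1⟩

lemma inner_tilde_self (a : CD (n + 1)) : CD.inner (tilde a) (tilde a) = CD.inner a a := by
  simp only [inner_succ, fst_tilde, snd_tilde, inner_neg_neg, add_comm]

lemma tilde_tilde (a : CD (n + 1)) : tilde (tilde a) = -a := by
  ext <;> simp

lemma mul_te0 (a : CD (n + 1)) : a * te0 (n + 1) = tilde a := by
  ext <;> simp [conj_zero]

lemma te0_mul_te0 : te0 (n + 1) * te0 (n + 1) = -e0 (n + 1) := by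
  ext <;> simp [conj_zero]

lemma IsDoublyPure.te0_mul {a : CD (n + 1)} (ha : IsDoublyPure a) :
    te0 (n + 1) * a = -tilde a := by
  ext <;> simp [ha.1.conj_eq, ha.2.conj_eq]

lemma IsDoublyPure.tilde_mul_self {a : CD (n + 1)} (ha : IsDoublyPure a) :
    tilde a * a = CD.inner a a • te0 (n + 1) := by
  ext
  · simp [ha.2.conj_eq]
  · simp [ha.1.conj_eq, ha.1.mul_self, ha.2.mul_self, inner_succ, add_smul, add_comm]

lemma IsDoublyPure.mul_tilde_self {a : CD (n + 1)} (ha : IsDoublyPure a) :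
    a * tilde a = -(CD.inner a a • te0 (n + 1)) := by
  ext
  · simp [ha.1.conj_eq]
  · simp [conj_neg, ha.1.mul_self, ha.2.conj_eq, ha.2.mul_self, inner_succ, add_smul, add_comm]

lemma isQuaternionTriple_tilde_self_te0 {a : CD (n + 1)} (ha : IsDoublyPure a)
    (h₁ : CD.inner a a = 1) : IsQuaternionTriple (e0 (n + 1)) (tilde a) a (te0 (n + 1)) where
  i_mul_i := by rw [(isDoublyPure_tilde ha).isPure.mul_self, inner_tilde_self, h₁, one_smul]
  j_mul_j := by rw [ha.isPure.mul_self, h₁, one_smul]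
  k_mul_k := te0_mul_te0
  i_mul_j := by rw [ha.tilde_mul_self, h₁, one_smul]
  j_mul_i := by rw [ha.mul_tilde_self, h₁, one_smul]
  j_mul_k := mul_te0 a
  k_mul_j := ha.te0_mul
  k_mul_i := by rw [(isDoublyPure_tilde ha).te0_mul, tilde_tilde, neg_neg]
  i_mul_k := by rw [mul_te0, tilde_tilde]

lemma isQuaternionTriple_q1_q2_q3 : IsQuaternionTriple (e0 2) q1 q2 q3 := by
  constructor <;> ext <;> simp only [fst_mul, snd_mul, fst_neg, snd_neg] <;>
    simp [q1, q2, q3, conj_zero, conj_neg]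

def quatEquivFun : CD 2 ≃ₗ[ℝ] (Fin 4 → ℝ) where
  toFun x := ![x.1.1, x.1.2, x.2.1, x.2.2]
  invFun v := ((v 0, v 1), (v 2, v 3))
  map_add' x y := by ext i; fin_cases i <;> rfl
  map_smul' r x := by ext i; fin_cases i <;> rfl
  left_inv x := rfl
  right_inv v := by ext i; fin_cases i <;> rfl

def quatBasis : Module.Basis (Fin 4) ℝ (CD 2) := .ofEquivFun quatEquivFun

lemma coe_quatBasis : ⇑quatBasis = ![e0 2, q1, q2, q3] := by
  rw [quatBasis, Module.Basis.coe_ofEquivFun]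
  funext i
  fin_cases i <;> rfl

def quatLift (i j k : CD n) : CD 2 →ₗ[ℝ] CD n := quatBasis.constr ℝ ![e0 n, i, j, k]

section quatLift

variable (i j k : CD n)

lemma quatLift_quatBasis (a : Fin 4) : quatLift i j k (quatBasis a) = ![e0 n, i, j, k] a :=
  quatBasis.constr_basis ℝ _ a

@[simp] lemma quatLift_e0 : quatLift i j k (e0 2) = e0 n := by
  simpa [coe_quatBasis] using quatLift_quatBasis i j k 0

@[simp] lemma quatLift_q1 : quatLift i j k q1 = i := by
  simpa [coe_quatBasis] using quatLift_quatBasis i j k 1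

@[simp] lemma quatLift_q2 : quatLift i j k q2 = j := by
  simpa [coe_quatBasis] using quatLift_quatBasis i j k 2

@[simp] lemma quatLift_q3 : quatLift i j k q3 = k := by
  simpa [coe_quatBasis] using quatLift_quatBasis i j k 3

lemma range_quatLift : LinearMap.range (quatLift i j k) = Submodule.span ℝ {e0 n, i, j, k} := by
  rw [quatLift, Module.Basis.constr_range]
  simp only [Matrix.range_cons, Matrix.range_empty, Set.union_empty, Set.singleton_union]

lemma quatLift_mul {i j k : CD n} (h : IsQuaternionTriple (e0 n) i j k) (x y : CD 2) :
    quatLift i j k (x * y) = quatLift i j k x * quatLift i j k y := by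
  have hq := isQuaternionTriple_q1_q2_q3
  have : (LinearMap.mul ℝ (CD 2)).compr₂ (quatLift i j k) =
      (LinearMap.mul ℝ (CD n)).compl₁₂ (quatLift i j k) (quatLift i j k) := by
    refine LinearMap.ext_basis quatBasis quatBasis fun a b => ?_
    fin_cases a <;> fin_cases b <;>
      simp [coe_quatBasis, hq.i_mul_i, hq.j_mul_j, hq.k_mul_k, hq.i_mul_j, hq.j_mul_i, hq.j_mul_k,
        hq.k_mul_j, hq.k_mul_i, hq.i_mul_k, h.i_mul_i, h.j_mul_j, h.k_mul_k, h.i_mul_j, h.j_mul_i,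
        h.j_mul_k, h.k_mul_j, h.k_mul_i, h.i_mul_k]
  exact LinearMap.congr_fun₂ this x y

end quatLift

lemma injective_of_map_mul {m : ℕ} (φ : CD m →ₗ[ℝ] CD n) (h₀ : φ (e0 m) = e0 n)
    (hφ : ∀ x y, φ (x * y) = φ x * φ y) : Function.Injective φ := by
  refine (injective_iff_map_eq_zero φ).mpr fun x hx => eq_zero_of_inner_self_eq_zero ?_
  have : CD.inner x x • e0 n = 0 := by
    rw [← h₀, ← map_smul, ← conj_mul_self, hφ, hx, mul_zero]
  exact (smul_eq_zero.mp this).resolve_right e0_ne_zero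

end CD

theorem statement3_general (n : ℕ) (a : CD n)
    (ha : CD.IsDoublyPure a) (hna : CD.norm a = 1) :
    (∀ x ∈ CD.Ha a, ∀ y ∈ CD.Ha a, x * y ∈ CD.Ha a) ∧
    ∃ φ : CD 2 →ₗ[ℝ] CD n,
      Function.Injective φ ∧
      LinearMap.range φ = CD.Ha a ∧
      φ (CD.e0 2) = CD.e0 n ∧ φ q1 = CD.tilde a ∧ φ q2 = a ∧ φ q3 = CD.te0 n ∧
      ∀ x y : CD 2, φ (x * y) = φ x * φ y := by
  cases n with
  | zero =>
    obtain rfl : a = 0 := ha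
    rw [CD.norm, show CD.inner (0 : CD 0) 0 = 0 from mul_zero (0 : ℝ), Real.sqrt_zero] at hna
    exact absurd hna zero_ne_one
  | succ m =>
    have hq := CD.isQuaternionTriple_tilde_self_te0 ha (Real.sqrt_eq_one.mp hna)
    have hrange := CD.range_quatLift (CD.tilde a) a (CD.te0 (m + 1))
    have hmul := CD.quatLift_mul hq
    refine ⟨?_, _, CD.injective_of_map_mul _ (CD.quatLift_e0 ..) hmul, hrange,
      CD.quatLift_e0 .., CD.quatLift_q1 .., CD.quatLift_q2 .., CD.quatLift_q3 .., hmul⟩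
    rw [CD.Ha, ← hrange]
    rintro _ ⟨x, rfl⟩ _ ⟨y, rfl⟩
    exact ⟨x * y, hmul x y⟩

/-- For `n ≥ 2` and doubly pure `a ∈ A n` with `‖a‖ = 1`, the span
`ℍ_a` of `{e₀, ã, a, ẽ₀}` is closed under multiplication, and the linear map sending
`e₀ ↦ e₀`, `e₁ ↦ ã`, `e₂ ↦ a`, `e₃ ↦ ẽ₀` is an algebra isomorphism from `A 2 = ℍ`
onto `ℍ_a`. -/
theorem statement3 (n : ℕ) (hn : 2 ≤ n) (a : CD n)
    (ha : CD.IsDoublyPure a) (hna : CD.norm a = 1) :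
    (∀ x ∈ CD.Ha a, ∀ y ∈ CD.Ha a, x * y ∈ CD.Ha a) ∧
    ∃ φ : CD 2 →ₗ[ℝ] CD n,
      Function.Injective φ ∧
      LinearMap.range φ = CD.Ha a ∧
      φ (CD.e0 2) = CD.e0 n ∧ φ q1 = CD.tilde a ∧ φ q2 = a ∧ φ q3 = CD.te0 n ∧
      ∀ x y : CD 2, φ (x * y) = φ x * φ y :=
  statement3_general n a ha hna
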